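/- arXiv:1806.00596 — 2 statements merged into one kernel-verified Lean document; each statement's English description precedes it below -/
import Mathlib

section
/- Let Z_1,...,Z_l ∈ ℤ^m be vectors with entries bounded by n^T in absolute value, and let p be a prime greater than e^{(k log k)/2 + kT log n}. If there is a non-zero vector w ∈ (ℤ/pℤ)^m with at most k non-zero entries that is orthogonal to the reductions Z_1 mod p, ..., Z_l mod p, then there is a non-zero vector w' ∈ ℤ^m with at most k non-zero entries orthogonal to Z_1,...,Z_l. -/
/-!
Let `s` be the support of `w`, of size `c ≤ k`. If the columns of `Z` indexed by `s` are linearly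
dependent over `ℤ`, a dependency is the required `w'`. Otherwise some `c × c` minor `A` of these
columns is nonsingular. Since `A` kills `w` restricted to `s` modulo `p`, the prime `p` divides
`det A ≠ 0`, whereas Hadamard's inequality gives
`|det A| ≤ (√c n^T)^c ≤ e^{(k log k)/2 + kT log n} < p`.
-/

open Matrix Module Submodule

namespace Matrix

theorem abs_det_le_prod_norm_row {n : ℕ} (A : Matrix (Fin n) (Fin n) ℝ) :
    |A.det| ≤ ∏ i, ‖WithLp.toLp 2 (A i)‖ := by
  have : Fact (finrank ℝ (EuclideanSpace ℝ (Fin n)) = n) := ⟨finrank_euclideanSpace_fin⟩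
  let b := EuclideanSpace.basisFun (Fin n) ℝ
  have h := b.toBasis.orientation.abs_volumeForm_apply_le fun i => WithLp.toLp 2 (A i)
  rw [b.toBasis.orientation.volumeForm_robust b rfl, Basis.det_apply, ← det_transpose] at h
  convert h
  ext i j
  simp [b, Basis.toMatrix_apply]

theorem abs_det_le_sqrt_card_mul_pow {ι : Type*} [Fintype ι] [DecidableEq ι]
    (A : Matrix ι ι ℝ) {x : ℝ} (hA : ∀ i j, |A i j| ≤ x) :
    |A.det| ≤ (√(Fintype.card ι) * x) ^ Fintype.card ι := by
  set e := Fintype.equivFin ι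
  rw [← det_submatrix_equiv_self e.symm]
  refine (abs_det_le_prod_norm_row _).trans ?_
  rw [← Fin.prod_const]
  gcongr with i
  have hx : 0 ≤ x := (abs_nonneg _).trans (hA (e.symm i) (e.symm i))
  rw [EuclideanSpace.norm_eq, ← Real.sqrt_sq hx, ← Real.sqrt_mul (Nat.cast_nonneg _)]
  gcongr
  calc ∑ j, ‖A (e.symm i) (e.symm j)‖ ^ 2 ≤ ∑ _j : Fin (Fintype.card ι), x ^ 2 := by
        gcongr with j
        exact hA _ _
    _ = _ := by simp

theorem exists_det_submatrix_ne_zero_of_linearIndependent_col {K m n : Type*} [Field K]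
    [Fintype m] [Fintype n] [DecidableEq n] {M : Matrix m n K} (hM : LinearIndependent K M.col) :
    ∃ r : n → m, (M.submatrix r id).det ≠ 0 := by
  have hspan : span K (Set.range M.row) = ⊤ := by
    apply eq_top_of_finrank_eq
    rw [← rank_eq_finrank_span_row, ← rank_transpose, hM.rank_matrix,
      finrank_fintype_fun_eq_card]
  obtain ⟨κ, a, -, hspan', hli⟩ := exists_linearIndependent' K M.row
  let e : n ≃ κ := (Pi.basisFun K n).indexEquiv (Basis.mk hli (by rw [hspan', hspan]))
  refine ⟨a ∘ e, ?_⟩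
  have hrows : LinearIndependent K (M.submatrix (a ∘ e) id).row := hli.comp e e.injective
  exact ((isUnit_iff_isUnit_det _).1 (linearIndependent_rows_iff_isUnit.1 hrows)).ne_zero

theorem exists_det_submatrix_ne_zero_of_linearIndependent_col' {R m n : Type*} [CommRing R]
    [IsDomain R] [Fintype m] [Fintype n] [DecidableEq n] {M : Matrix m n R}
    (hM : LinearIndependent R M.col) :
    ∃ r : n → m, (M.submatrix r id).det ≠ 0 := by
  let K := FractionRing R
  have hinj : Function.Injective (algebraMap R K) := IsFractionRing.injective R K
  have hMK : LinearIndependent K (M.map (algebraMap R K)).col := by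
    rw [← LinearIndependent.iff_fractionRing R K]
    exact hM.map' (LinearMap.compLeft (Algebra.linearMap R K) m)
      (LinearMap.ker_eq_bot.2 fun u v huv => funext fun i => hinj (congrFun huv i))
  obtain ⟨r, hr⟩ := exists_det_submatrix_ne_zero_of_linearIndependent_col hMK
  refine ⟨r, fun h => hr ?_⟩
  rw [submatrix_map, ← RingHom.mapMatrix_apply, ← RingHom.map_det, h, map_zero]

theorem exists_mulVec_eq_zero_of_not_linearIndepOn {R ι κ : Type*} [CommRing R] [Fintype κ]
    {Z : Matrix ι κ R} {s : Set κ} (h : ¬ LinearIndepOn R Z.col s) :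
    ∃ v : κ → R, v ≠ 0 ∧ {j | v j ≠ 0} ⊆ s ∧ Z *ᵥ v = 0 := by
  simp only [linearIndepOn_iff, not_forall] at h
  obtain ⟨l, hls, hl, hl0⟩ := h
  refine ⟨l, by simpa using hl0, fun j hj => hls (Finsupp.mem_support_iff.2 hj), ?_⟩
  rw [← hl]
  ext i
  simp [mulVec, dotProduct, Finsupp.linearCombination_apply, Finsupp.sum_fintype, mul_comm]

theorem natCast_dvd_det_of_mulVec_eq_zero {ι : Type*} [Fintype ι] [DecidableEq ι] {p : ℕ}
    [Fact p.Prime] (A : Matrix ι ι ℤ) {u : ι → ZMod p} (hu : u ≠ 0)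
    (hAu : A.map (Int.cast : ℤ → ZMod p) *ᵥ u = 0) : (p : ℤ) ∣ A.det := by
  rw [← ZMod.intCast_zmod_eq_zero_iff_dvd, Int.cast_det]
  exact exists_mulVec_eq_zero_iff.1 ⟨u, hu, hAu⟩

theorem natCast_le_sqrt_ncard_mul_pow_of_linearIndepOn {ι κ : Type*} [Fintype ι] [Fintype κ]
    {p : ℕ} [Fact p.Prime] {Z : Matrix ι κ ℤ} {x : ℝ} (hZ : ∀ i j, (|Z i j| : ℝ) ≤ x)
    {w : κ → ZMod p} (hw : w ≠ 0) (hZw : Z.map (Int.cast : ℤ → ZMod p) *ᵥ w = 0)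
    (hli : LinearIndepOn ℤ Z.col {j | w j ≠ 0}) :
    (p : ℝ) ≤ (√{j | w j ≠ 0}.ncard * x) ^ {j | w j ≠ 0}.ncard := by
  classical
  set s := {j | w j ≠ 0}
  obtain ⟨r, hr⟩ := exists_det_submatrix_ne_zero_of_linearIndependent_col'
    (M := Z.submatrix id ((↑) : s → κ)) hli
  set A := Z.submatrix r ((↑) : s → κ)
  have hu : (fun j : s => w j) ≠ 0 := by
    obtain ⟨j, hj⟩ := Function.ne_iff.1 hw
    exact Function.ne_iff.2 ⟨⟨j, hj⟩, hj⟩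
  have hAu : A.map (Int.cast : ℤ → ZMod p) *ᵥ (fun j : s => w j) = 0 := by
    ext a
    calc ∑ j : s, (Z (r a) j : ZMod p) * w j = ∑ j, (Z (r a) j : ZMod p) * w j := by
          refine (Finset.sum_set_coe (f := fun j => (Z (r a) j : ZMod p) * w j) s).trans ?_
          exact Finset.sum_subset (Finset.subset_univ _) fun j _ hj => by simp_all [s]
      _ = 0 := congrFun hZw (r a)
  have hdvd := natCast_dvd_det_of_mulVec_eq_zero A hu hAu
  calc (p : ℝ) ≤ |(A.det : ℝ)| := by
        exact_mod_cast Int.le_of_dvd (abs_pos.2 hr) ((dvd_abs _ _).2 hdvd)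
    _ ≤ (√(Fintype.card s) * x) ^ Fintype.card s := by
        rw [Int.cast_det]
        exact abs_det_le_sqrt_card_mul_pow _ fun a b => hZ (r a) b
    _ = _ := by rw [Set.ncard_eq_toFinset_card' s, Set.toFinset_card]

end Matrix

theorem Real.sqrt_mul_pow_le_exp {c k : ℕ} {x : ℝ} (hc : 0 < c) (hck : c ≤ k) (hx : 1 ≤ x) :
    (√c * x) ^ c ≤ Real.exp (k * Real.log k / 2 + k * Real.log x) := by
  have hk : (1 : ℝ) ≤ k := by exact_mod_cast hc.trans_le hck
  have hbase : 1 ≤ √k * x := one_le_mul_of_one_le_of_one_le (Real.one_le_sqrt.2 hk) hx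
  calc (√c * x) ^ c ≤ (√k * x) ^ c := by gcongr
    _ ≤ (√k * x) ^ k := pow_le_pow_right₀ hbase hck
    _ = Real.exp (k * Real.log (√k * x)) := by
        rw [Real.exp_nat_mul, Real.exp_log (by positivity)]
    _ = Real.exp (k * Real.log k / 2 + k * Real.log x) := by
        rw [Real.log_mul (by positivity) (by positivity), Real.log_sqrt (by positivity)]
        congr 1
        ring

theorem lift_sparse_normal_vector_general {m l k n : ℕ}
    (hn : 0 < n) (T : ℝ) (hT : 0 < T)
    (Z : Fin l → Fin m → ℤ) (hZ : ∀ i j, (|Z i j| : ℝ) ≤ (n : ℝ) ^ T)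
    (p : ℕ) [Fact p.Prime]
    (hp : Real.exp ((k * Real.log k) / 2 + k * T * Real.log n) < p)
    (w : Fin m → ZMod p) (hw0 : w ≠ 0)
    (hwsupp : Set.ncard {j | w j ≠ 0} ≤ k)
    (hworth : ∀ i, ∑ j, (Z i j : ZMod p) * w j = 0) :
    ∃ w' : Fin m → ℤ, w' ≠ 0 ∧ Set.ncard {j | w' j ≠ 0} ≤ k ∧
      ∀ i, ∑ j, Z i j * w' j = 0 := by
  by_cases hli : LinearIndepOn ℤ (Matrix.col Z) {j | w j ≠ 0}
  · have hc : 0 < Set.ncard {j | w j ≠ 0} := by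
      obtain ⟨j, hj⟩ := Function.ne_iff.1 hw0
      exact (Set.ncard_pos (Set.toFinite _)).2 ⟨j, hj⟩
    have hx : 1 ≤ (n : ℝ) ^ T := Real.one_le_rpow (by exact_mod_cast hn) hT.le
    have hbound := Real.sqrt_mul_pow_le_exp hc hwsupp hx
    rw [Real.log_rpow (by exact_mod_cast hn), ← mul_assoc] at hbound
    exact absurd hp (not_lt.2 ((natCast_le_sqrt_ncard_mul_pow_of_linearIndepOn hZ hw0
      (funext hworth) hli).trans hbound))
  · obtain ⟨w', hw'0, hw's, hZw'⟩ := exists_mulVec_eq_zero_of_not_linearIndepOn hli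
    exact ⟨w', hw'0, (Set.ncard_le_ncard hw's).trans hwsupp, congrFun hZw'⟩

/-- Lifting sparse normal vectors from `ℤ/pℤ` to `ℤ`: if `Z_1, ..., Z_l ∈ ℤ^m` have entries
bounded by `n^T`, `p` is a prime larger than `exp((k log k)/2 + kT log n)`, and some non-zero
vector `w ∈ (ℤ/pℤ)^m` with at most `k` non-zero entries is orthogonal to all `Z_i mod p`, then
there is a non-zero `w' ∈ ℤ^m` with at most `k` non-zero entries orthogonal to all `Z_i`. -/
theorem lift_sparse_normal_vector {m l k n : ℕ} (hm : 0 < m) (hl : 0 < l) (hk : 0 < k)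
    (hn : 0 < n) (T : ℝ) (hT : 0 < T)
    (Z : Fin l → Fin m → ℤ) (hZ : ∀ i j, (|Z i j| : ℝ) ≤ (n : ℝ) ^ T)
    (p : ℕ) [Fact p.Prime]
    (hp : Real.exp ((k * Real.log k) / 2 + k * T * Real.log n) < p)
    (w : Fin m → ZMod p) (hw0 : w ≠ 0)
    (hwsupp : Set.ncard {j | w j ≠ 0} ≤ k)
    (hworth : ∀ i, ∑ j, (Z i j : ZMod p) * w j = 0) :
    ∃ w' : Fin m → ℤ, w' ≠ 0 ∧ Set.ncard {j | w' j ≠ 0} ≤ k ∧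
      ∀ i, ∑ j, Z i j * w' j = 0 :=
  lift_sparse_normal_vector_general hn T hT Z hZ p hp w hw0 hwsupp hworth
end

section
/- Let X ∈ (ℤ/pℤ)^n be a random vector with i.i.d. entries that are copies of a random variable ν satisfying max_{r∈ℤ/pℤ} P(ν = r) ≤ 1-α. Suppose w ∈ (ℤ/pℤ)^n has at least n' non-zero coordinates and α ≥ 4/n'. Then for every r ∈ ℤ/pℤ, |P(X·w = r) - 1/p| ≤ 2/√(αn'). -/
/-!
Fourier analysis on `ℤ/pℤ`. With `e(x) = exp(2πix/p)` and `φ` the characteristic function of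
`ν`, orthogonality of characters gives
`P(X·w = r) - 1/p = (1/p) ∑_{ξ ≠ 0} e(-ξr) ∏ᵢ φ(ξ wᵢ)`.
Since `cos 2πx ≤ 1 - 8‖x‖²`, `|φ(t)|² ≤ 1 - 8 ∑_{a ≠ b} q_a q_b ‖t(a - b)/p‖²`, and Jensen's
inequality (the off-diagonal mass `∑_{a ≠ b} q_a q_b` is at least `α`) bounds `|φ(t)|^{2m}` by an
average over `a ≠ b` of `exp(-8mα‖t(a - b)/p‖²)`. Keeping `2m ≈ n'` coordinates with `wᵢ ≠ 0` and
applying AM-GM, the sum over `ξ ≠ 0` reduces, after the substitution `s = ξ wᵢ (a - b)`, to the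
Gaussian sum `∑_{s ≠ 0} exp(-8mα‖s/p‖²) ≤ p √(π/(8mα))`, bounded by comparison with an integral.
-/

open MeasureTheory ProbabilityTheory Finset Real

theorem sum_range_exp_neg_mul_sq_le {c : ℝ} (hc : 0 < c) (N : ℕ) :
    ∑ k ∈ range N, exp (-c * ((k : ℝ) + 1) ^ 2) ≤ √(π / c) / 2 := by
  have hanti : AntitoneOn (fun x : ℝ ↦ exp (-c * x ^ 2)) (Set.Icc 0 (0 + N)) :=
    fun x hx y hy hxy ↦ exp_le_exp.2 <| by nlinarith [mul_le_mul hxy hxy hx.1 (hx.1.trans hxy)]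
  calc ∑ k ∈ range N, exp (-c * ((k : ℝ) + 1) ^ 2)
      = ∑ k ∈ range N, exp (-c * (0 + ((k + 1 : ℕ) : ℝ)) ^ 2) := by simp
    _ ≤ ∫ x in (0 : ℝ)..0 + N, exp (-c * x ^ 2) := hanti.sum_le_integral
    _ ≤ ∫ x in Set.Ioi 0, exp (-c * x ^ 2) := by
        rw [intervalIntegral.integral_of_le (by positivity)]
        exact setIntegral_mono_set (integrable_exp_neg_mul_sq hc).integrableOn
          (.of_forall fun _ ↦ (exp_pos _).le) (.of_forall fun _ hx ↦ hx.1)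
    _ = √(π / c) / 2 := integral_gaussian_Ioi c

theorem Finset.sum_erase_zero_comp_mul_right {G M : Type*} [GroupWithZero G] [Fintype G]
    [DecidableEq G] [AddCommMonoid M] (f : G → M) {c : G} (hc : c ≠ 0) :
    ∑ x ∈ univ.erase 0, f (x * c) = ∑ x ∈ univ.erase 0, f x :=
  sum_nbij' (· * c) (· * c⁻¹) (by simp [hc]) (by simp [hc]) (by simp [hc]) (by simp [hc])
    fun _ _ ↦ rfl

namespace ZMod

variable {p : ℕ}

/-- `‖z / p‖²`, the squared distance from `z / p` to the nearest integer. -/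
noncomputable def circNormSq (z : ZMod p) : ℝ := ((z.valMinAbs : ℝ) / p) ^ 2

@[simp] theorem circNormSq_zero : circNormSq (0 : ZMod p) = 0 := by simp [circNormSq]

variable [NeZero p]

theorem sum_val_eq_sum_range {M : Type*} [AddCommMonoid M] (g : ℕ → M) :
    ∑ s : ZMod p, g s.val = ∑ k ∈ range p, g k :=
  sum_nbij' val (fun k ↦ (k : ZMod p)) (by simp [val_lt]) (by simp) (by simp)
    (fun k hk ↦ by simp at hk; simp [val_cast_of_lt hk]) (by simp)

theorem sum_erase_zero_exp_neg_mul_val_sq_le {c : ℝ} (hc : 0 < c) :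
    ∑ s ∈ univ.erase (0 : ZMod p), exp (-c * (s.val : ℝ) ^ 2) ≤ √(π / c) / 2 := by
  obtain ⟨N, rfl⟩ := Nat.exists_eq_succ_of_ne_zero (NeZero.ne p)
  have h := sum_val_eq_sum_range (p := N + 1) fun k ↦ exp (-c * (k : ℝ) ^ 2)
  rw [sum_range_succ', ← add_sum_erase _ _ (mem_univ 0), val_zero, add_comm] at h
  push_cast at h
  rw [add_right_cancel h]
  exact sum_range_exp_neg_mul_sq_le hc N

theorem sum_erase_zero_exp_neg_mul_circNormSq_le {β : ℝ} (hβ : 0 < β) :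
    ∑ s ∈ univ.erase (0 : ZMod p), exp (-β * circNormSq s) ≤ p * √(π / β) := by
  have hp : (0 : ℝ) < p := by simp [Nat.pos_of_neZero]
  set c := β / p ^ 2
  have hterm (s : ZMod p) :
      exp (-β * circNormSq s)
        ≤ exp (-c * (s.val : ℝ) ^ 2) + exp (-c * ((-s).val : ℝ) ^ 2) := by
    have hmin : (s.valMinAbs : ℝ) ^ 2 = (min s.val (p - s.val) : ℕ) ^ 2 := by
      rw [← valMinAbs_natAbs_eq_min, Nat.cast_natAbs, Int.cast_abs, sq_abs]
    have hβc : -β * circNormSq s = -c * (s.valMinAbs : ℝ) ^ 2 := by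
      simp only [circNormSq, c]; field_simp
    rcases eq_or_ne s 0 with rfl | hs
    · simp [circNormSq]
    rw [hβc, hmin]
    rcases min_choice s.val (p - s.val) with h | h <;> rw [h]
    · exact le_add_of_nonneg_right (exp_pos _).le
    · rw [neg_val, if_neg hs]
      exact le_add_of_nonneg_left (exp_pos _).le
  have hneg : ∑ s ∈ univ.erase (0 : ZMod p), exp (-c * ((-s).val : ℝ) ^ 2)
      = ∑ s ∈ univ.erase (0 : ZMod p), exp (-c * (s.val : ℝ) ^ 2) :=
    sum_nbij' Neg.neg Neg.neg (by simp) (by simp) (by simp) (by simp) (by simp)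
  calc ∑ s ∈ univ.erase 0, exp (-β * circNormSq s)
      ≤ ∑ s ∈ univ.erase 0,
          (exp (-c * (s.val : ℝ) ^ 2) + exp (-c * ((-s).val : ℝ) ^ 2)) :=
        sum_le_sum fun s _ ↦ hterm s
    _ = 2 * ∑ s ∈ univ.erase (0 : ZMod p), exp (-c * (s.val : ℝ) ^ 2) := by
        rw [sum_add_distrib, hneg, two_mul]
    _ ≤ 2 * (√(π / c) / 2) := by
        gcongr; exact sum_erase_zero_exp_neg_mul_val_sq_le (by positivity)
    _ = p * √(π / β) := by
        rw [show π / c = p ^ 2 * (π / β) by simp only [c]; field_simp, sqrt_mul (by positivity),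
          sqrt_sq hp.le]
        ring

theorem stdAddChar_re_le (z : ZMod p) : (stdAddChar z).re ≤ 1 - 8 * circNormSq z := by
  have hp : (0 : ℝ) < p := by simp [Nat.pos_of_neZero]
  set x := 2 * π * ((z.valMinAbs : ℝ) / p)
  have hre : (stdAddChar z).re = cos x := by
    rw [← coe_valMinAbs z, stdAddChar_apply, toCircle_intCast,
      show 2 * π * Complex.I * (z.valMinAbs : ℂ) / p = (x : ℂ) * Complex.I by
        simp only [x]; push_cast; ring,
      Complex.exp_ofReal_mul_I_re]
  have hx : |x| ≤ π := by
    obtain ⟨h₁, h₂⟩ := valMinAbs_mem_Ioc z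
    have h₁ : -(p : ℝ) < z.valMinAbs * 2 := by exact_mod_cast h₁
    have h₂ : (z.valMinAbs : ℝ) * 2 ≤ p := by exact_mod_cast h₂
    have : |(z.valMinAbs : ℝ) / p| ≤ 1 / 2 := by
      rw [abs_le, le_div_iff₀ hp, div_le_iff₀ hp]; constructor <;> linarith
    calc |x| = 2 * π * |(z.valMinAbs : ℝ) / p| := by
          simp only [x]; rw [abs_mul, abs_of_pos (by positivity : 0 < 2 * π)]
      _ ≤ 2 * π * (1 / 2) := by gcongr
      _ = π := by ring
  rw [hre]
  calc cos x ≤ 1 - 2 / π ^ 2 * x ^ 2 := cos_le_one_sub_mul_cos_sq hx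
    _ = 1 - 8 * circNormSq z := by simp only [x, circNormSq]; field_simp; ring

end ZMod

theorem Finset.sum_offDiag_add_sum_diag {ι M : Type*} [Fintype ι] [DecidableEq ι]
    [AddCommMonoid M] (f : ι → ι → M) :
    ∑ x ∈ univ.offDiag, f x.1 x.2 + ∑ a, f a a = ∑ a, ∑ b, f a b := by
  rw [← sum_product', ← diag_union_offDiag, sum_union (disjoint_diag_offDiag _), sum_diag,
    add_comm]

section CharFun

variable {p : ℕ} [NeZero p]

noncomputable def charFunZMod (q : ZMod p → ℝ) (t : ZMod p) : ℂ :=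
  ∑ a, (q a : ℂ) * ZMod.stdAddChar (t * a)

variable {q : ZMod p → ℝ}

theorem charFunZMod_zero (hq1 : ∑ a, q a = 1) : charFunZMod q 0 = 1 := by
  simp [charFunZMod, ← Complex.ofReal_sum, hq1]

theorem norm_charFunZMod_le_one (hq0 : ∀ a, 0 ≤ q a) (hq1 : ∑ a, q a = 1) (t : ZMod p) :
    ‖charFunZMod q t‖ ≤ 1 :=
  (norm_sum_le _ _).trans_eq (by simp [abs_of_nonneg (hq0 _), hq1])

theorem norm_charFunZMod_sq (t : ZMod p) :
    ‖charFunZMod q t‖ ^ 2 = ∑ a, ∑ b, q a * q b * (ZMod.stdAddChar (t * (a - b))).re := by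
  rw [← Complex.ofReal_re (_ ^ 2), Complex.ofReal_pow, ← Complex.mul_conj', charFunZMod,
    map_sum, sum_mul_sum, Complex.re_sum]
  refine sum_congr rfl fun a _ ↦ ?_
  rw [Complex.re_sum]
  refine sum_congr rfl fun b _ ↦ ?_
  rw [map_mul (starRingEnd ℂ), Complex.conj_ofReal, ← AddChar.map_neg_eq_conj, mul_sub,
    sub_eq_add_neg, AddChar.map_add_eq_mul, ← Complex.re_ofReal_mul]
  push_cast
  ring_nf

theorem le_sum_offDiag_mul {α : ℝ} (hq0 : ∀ a, 0 ≤ q a) (hq1 : ∑ a, q a = 1)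
    (hqα : ∀ a, q a ≤ 1 - α) : α ≤ ∑ x ∈ univ.offDiag, q x.1 * q x.2 := by
  have hsplit := sum_offDiag_add_sum_diag fun a b ↦ q a * q b
  rw [← sum_mul_sum, hq1, one_mul] at hsplit
  have hdiag : ∑ a, q a * q a ≤ 1 - α :=
    calc ∑ a, q a * q a ≤ ∑ a, (1 - α) * q a :=
          sum_le_sum fun a _ ↦ mul_le_mul_of_nonneg_right (hqα a) (hq0 a)
      _ = 1 - α := by rw [← mul_sum, hq1, mul_one]
  linarith

theorem norm_charFunZMod_sq_le (hq0 : ∀ a, 0 ≤ q a) (hq1 : ∑ a, q a = 1) (t : ZMod p) :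
    ‖charFunZMod q t‖ ^ 2
      ≤ 1 - 8 * ∑ x ∈ univ.offDiag, q x.1 * q x.2 * ZMod.circNormSq (t * (x.1 - x.2)) := by
  have hsplit := sum_offDiag_add_sum_diag fun a b ↦ q a * q b * ZMod.circNormSq (t * (a - b))
  simp only [sub_self, mul_zero, ZMod.circNormSq_zero, sum_const_zero, add_zero] at hsplit
  rw [norm_charFunZMod_sq]
  calc ∑ a, ∑ b, q a * q b * (ZMod.stdAddChar (t * (a - b))).re
      ≤ ∑ a, ∑ b, q a * q b * (1 - 8 * ZMod.circNormSq (t * (a - b))) := by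
        gcongr with a _ b _
        · exact mul_nonneg (hq0 a) (hq0 b)
        · exact ZMod.stdAddChar_re_le _
    _ = (∑ a, q a) * (∑ b, q b) - 8 * ∑ a, ∑ b, q a * q b * ZMod.circNormSq (t * (a - b)) := by
        rw [sum_mul_sum]
        simp only [mul_sub, mul_one, sum_sub_distrib, mul_sum, mul_left_comm (8 : ℝ)]
    _ = _ := by rw [hq1, one_mul, ← hsplit]

theorem norm_charFunZMod_pow_le {α : ℝ} (hq0 : ∀ a, 0 ≤ q a) (hq1 : ∑ a, q a = 1)
    (hα : 0 < α) (hqα : ∀ a, q a ≤ 1 - α) (m : ℕ) (t : ZMod p) :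
    ‖charFunZMod q t‖ ^ (2 * m)
      ≤ ∑ x ∈ univ.offDiag, q x.1 * q x.2 / (∑ y ∈ univ.offDiag, q y.1 * q y.2)
          * exp (-(8 * m * α) * ZMod.circNormSq (t * (x.1 - x.2))) := by
  set Q := ∑ y ∈ univ.offDiag, q y.1 * q y.2
  set W := ∑ x ∈ univ.offDiag, q x.1 * q x.2 * ZMod.circNormSq (t * (x.1 - x.2))
  have hQα : α ≤ Q := le_sum_offDiag_mul hq0 hq1 hqα
  have hQ : 0 < Q := hα.trans_le hQα
  have hweights0 (x : ZMod p × ZMod p) : 0 ≤ q x.1 * q x.2 / Q :=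
    div_nonneg (mul_nonneg (hq0 _) (hq0 _)) hQ.le
  have hweights : ∑ x ∈ univ.offDiag, q x.1 * q x.2 / Q = 1 := by
    rw [← sum_div, div_self hQ.ne']
  have hjensen := convexOn_exp.map_sum_le (t := univ.offDiag) (w := fun x ↦ q x.1 * q x.2 / Q)
    (p := fun x ↦ -(8 * m * Q) * ZMod.circNormSq (t * (x.1 - x.2)))
    (fun x _ ↦ hweights0 x) hweights (fun _ _ ↦ trivial)
  calc ‖charFunZMod q t‖ ^ (2 * m)
      = (‖charFunZMod q t‖ ^ 2) ^ m := pow_mul _ _ _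
    _ ≤ exp (-8 * W) ^ m := by
        gcongr
        exact (norm_charFunZMod_sq_le hq0 hq1 t).trans (by linarith [add_one_le_exp (-8 * W)])
    _ = exp (∑ x ∈ univ.offDiag,
          q x.1 * q x.2 / Q * (-(8 * m * Q) * ZMod.circNormSq (t * (x.1 - x.2)))) := by
        rw [← exp_nat_mul]
        congr 1
        simp only [W, mul_sum]
        refine sum_congr rfl fun x _ ↦ ?_
        field_simp
    _ ≤ ∑ x ∈ univ.offDiag, q x.1 * q x.2 / Q
          * exp (-(8 * m * Q) * ZMod.circNormSq (t * (x.1 - x.2))) := by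
        simpa only [smul_eq_mul] using hjensen
    _ ≤ _ := by
        gcongr with x
        · exact hweights0 x
        · exact sq_nonneg _

theorem sum_erase_zero_norm_charFunZMod_pow_le [Fact p.Prime] {α : ℝ} (hq0 : ∀ a, 0 ≤ q a)
    (hq1 : ∑ a, q a = 1) (hα : 0 < α) (hqα : ∀ a, q a ≤ 1 - α) (m : ℕ) {c : ZMod p}
    (hc : c ≠ 0) :
    ∑ ξ ∈ univ.erase 0, ‖charFunZMod q (ξ * c)‖ ^ (2 * m)
      ≤ ∑ s ∈ univ.erase (0 : ZMod p), exp (-(8 * m * α) * ZMod.circNormSq s) := by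
  set Q := ∑ y ∈ univ.offDiag, q y.1 * q y.2
  set G := ∑ s ∈ univ.erase (0 : ZMod p), exp (-(8 * m * α) * ZMod.circNormSq s)
  have hQ : 0 < Q := hα.trans_le (le_sum_offDiag_mul hq0 hq1 hqα)
  calc ∑ ξ ∈ univ.erase 0, ‖charFunZMod q (ξ * c)‖ ^ (2 * m)
      ≤ ∑ ξ ∈ univ.erase 0, ∑ x ∈ univ.offDiag, q x.1 * q x.2 / Q
          * exp (-(8 * m * α) * ZMod.circNormSq (ξ * (c * (x.1 - x.2)))) := by
        gcongr with ξ
        simpa only [mul_assoc] using norm_charFunZMod_pow_le hq0 hq1 hα hqα m (ξ * c)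
    _ = ∑ x ∈ univ.offDiag, q x.1 * q x.2 / Q * G := by
        rw [sum_comm]
        refine sum_congr rfl fun x hx ↦ ?_
        have hcx : c * (x.1 - x.2) ≠ 0 := mul_ne_zero hc (sub_ne_zero.2 (mem_offDiag.1 hx).2.2)
        rw [← mul_sum,
          sum_erase_zero_comp_mul_right (fun s ↦ exp (-(8 * m * α) * ZMod.circNormSq s)) hcx]
    _ = G := by rw [← sum_mul, ← sum_div, div_self hQ.ne', one_mul]

end CharFun

theorem AddChar.map_sum_eq_prod {A M ι : Type*} [AddCommMonoid A] [CommMonoid M]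
    (ψ : AddChar A M) (s : Finset ι) (f : ι → A) : ψ (∑ i ∈ s, f i) = ∏ i ∈ s, ψ (f i) :=
  map_prod ψ.toMonoidHom _ _

section Fourier

variable {p : ℕ} [NeZero p] {ι : Type*} [Fintype ι] [DecidableEq ι]

theorem sum_prod_ite_eq_charFunZMod (q : ZMod p → ℝ) (w : ι → ZMod p) (r : ZMod p) :
    ((∑ v : ι → ZMod p, if ∑ i, v i * w i = r then ∏ i, q (v i) else 0 : ℝ) : ℂ)
      = 1 / p * ∑ ξ, ZMod.stdAddChar (-(ξ * r)) * ∏ i, charFunZMod q (ξ * w i) := by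
  have horth (x : ZMod p) :
      (if x = r then (1 : ℂ) else 0) = 1 / p * ∑ ξ, ZMod.stdAddChar (ξ * (x - r)) := by
    rw [AddChar.sum_mulShift _ (ZMod.isPrimitive_stdAddChar p), ZMod.card]
    split_ifs <;> simp_all [sub_eq_zero, NeZero.ne p]
  calc ((∑ v : ι → ZMod p, if ∑ i, v i * w i = r then ∏ i, q (v i) else 0 : ℝ) : ℂ)
      = ∑ v : ι → ZMod p, (∏ i, (q (v i) : ℂ)) * (if ∑ i, v i * w i = r then 1 else 0) := by
        rw [Complex.ofReal_sum]
        refine sum_congr rfl fun v _ ↦ ?_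
        split_ifs <;> simp
    _ = 1 / p * ∑ ξ, ∑ v : ι → ZMod p,
          ZMod.stdAddChar (-(ξ * r))
            * ∏ i, (q (v i) : ℂ) * ZMod.stdAddChar (ξ * w i * v i) := by
        simp only [horth, mul_sum, mul_left_comm _ (1 / (p : ℂ))]
        rw [sum_comm]
        refine sum_congr rfl fun ξ _ ↦ sum_congr rfl fun v _ ↦ ?_
        rw [prod_mul_distrib, ← AddChar.map_sum_eq_prod, mul_sub, sub_eq_neg_add,
          AddChar.map_add_eq_mul, mul_sum]
        simp only [mul_comm, mul_left_comm]
    _ = 1 / p * ∑ ξ, ZMod.stdAddChar (-(ξ * r)) * ∏ i, charFunZMod q (ξ * w i) := by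
        simp only [← mul_sum, charFunZMod, Fintype.prod_sum]

theorem abs_sum_prod_ite_sub_inv_le {q : ZMod p → ℝ} (hq1 : ∑ a, q a = 1)
    (w : ι → ZMod p) (r : ZMod p) :
    |(∑ v : ι → ZMod p, if ∑ i, v i * w i = r then ∏ i, q (v i) else 0) - 1 / p|
      ≤ 1 / p * ∑ ξ ∈ univ.erase 0, ∏ i, ‖charFunZMod q (ξ * w i)‖ := by
  have hexp := sum_prod_ite_eq_charFunZMod q w r
  rw [← add_sum_erase (univ : Finset (ZMod p)) _ (mem_univ 0)] at hexp
  simp only [zero_mul, neg_zero, AddChar.map_zero_eq_one, charFunZMod_zero hq1, prod_const_one,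
    mul_one, mul_add] at hexp
  rw [← Real.norm_eq_abs, ← Complex.norm_real, Complex.ofReal_sub, hexp]
  push_cast
  rw [add_sub_cancel_left, norm_mul, norm_div, norm_one, Complex.norm_natCast]
  gcongr
  refine (norm_sum_le _ _).trans (sum_le_sum fun ξ _ ↦ ?_)
  rw [norm_mul, AddChar.norm_apply, one_mul, norm_prod]

end Fourier

theorem Finset.prod_le_sum_pow_card_div {ι : Type*} {s : Finset ι} (hs : s.Nonempty)
    {y : ι → ℝ} (hy : ∀ i ∈ s, 0 ≤ y i) : ∏ i ∈ s, y i ≤ (∑ i ∈ s, y i ^ #s) / #s := by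
  have hk : (0 : ℝ) < #s := by exact_mod_cast hs.card_pos
  have hamgm := Real.geom_mean_le_arith_mean_weighted s (fun _ ↦ 1 / (#s : ℝ)) (fun i ↦ y i ^ #s)
    (fun _ _ ↦ by positivity) (by simp [hk.ne']) (fun i hi ↦ pow_nonneg (hy i hi) _)
  calc ∏ i ∈ s, y i = ∏ i ∈ s, (y i ^ #s) ^ (1 / (#s : ℝ)) := by
        refine prod_congr rfl fun i hi ↦ ?_
        rw [← Real.rpow_natCast, ← Real.rpow_mul (hy i hi), mul_one_div_cancel hk.ne',
          Real.rpow_one]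
    _ ≤ _ := hamgm
    _ = _ := by rw [sum_div]; simp only [one_div_mul_eq_div]

theorem abs_sum_prod_ite_sub_inv_le_sqrt {p : ℕ} [Fact p.Prime] {ι : Type*} [Fintype ι]
    [DecidableEq ι] {q : ZMod p → ℝ} {α : ℝ} (hq0 : ∀ a, 0 ≤ q a) (hq1 : ∑ a, q a = 1)
    (hα : 0 < α) (hqα : ∀ a, q a ≤ 1 - α) {w : ι → ZMod p} {T : Finset ι}
    (hT : ∀ i ∈ T, w i ≠ 0) {m : ℕ} (hm : 0 < m) (hTm : #T = 2 * m) (r : ZMod p) :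
    |(∑ v : ι → ZMod p, if ∑ i, v i * w i = r then ∏ i, q (v i) else 0) - 1 / p|
      ≤ √(π / (8 * m * α)) := by
  have hp : (0 : ℝ) < p := by exact_mod_cast (Fact.out : p.Prime).pos
  have hm' : (0 : ℝ) < 2 * m := by positivity
  set φ := fun ξ i ↦ ‖charFunZMod q (ξ * w i)‖
  set G := ∑ s ∈ univ.erase (0 : ZMod p), exp (-(8 * m * α) * ZMod.circNormSq s)
  have hamgm (ξ : ZMod p) : ∏ i, φ ξ i ≤ (∑ i ∈ T, φ ξ i ^ (2 * m)) / (2 * m) := by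
    have hT0 : T.Nonempty := card_pos.1 (by omega)
    calc ∏ i, φ ξ i ≤ ∏ i ∈ T, φ ξ i :=
          prod_le_prod_of_subset_of_le_one (subset_univ T) (fun _ _ ↦ norm_nonneg _)
            fun _ _ _ ↦ norm_charFunZMod_le_one hq0 hq1 _
      _ ≤ _ := by
          simpa [hTm] using prod_le_sum_pow_card_div hT0 (y := φ ξ) fun _ _ ↦ norm_nonneg _
  calc |(∑ v : ι → ZMod p, if ∑ i, v i * w i = r then ∏ i, q (v i) else 0) - 1 / p|
      ≤ 1 / p * ∑ ξ ∈ univ.erase 0, ∏ i, φ ξ i := abs_sum_prod_ite_sub_inv_le hq1 w r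
    _ ≤ 1 / p * ∑ ξ ∈ univ.erase 0, (∑ i ∈ T, φ ξ i ^ (2 * m)) / (2 * m) := by
        gcongr with ξ; exact hamgm ξ
    _ = 1 / p * (∑ i ∈ T, ∑ ξ ∈ univ.erase 0, φ ξ i ^ (2 * m)) / (2 * m) := by
        rw [← sum_div, sum_comm, mul_div_assoc]
    _ ≤ 1 / p * (∑ _i ∈ T, G) / (2 * m) := by
        gcongr with i hi
        exact sum_erase_zero_norm_charFunZMod_pow_le hq0 hq1 hα hqα m (hT i hi)
    _ = 1 / p * G := by rw [sum_const, hTm, nsmul_eq_mul]; field_simp; push_cast; ring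
    _ ≤ 1 / p * (p * √(π / (8 * m * α))) := by
        gcongr; exact ZMod.sum_erase_zero_exp_neg_mul_circNormSq_le (by positivity)
    _ = √(π / (8 * m * α)) := by field_simp

theorem ProbabilityTheory.iIndepFun.measureReal_mem_finset_eq_sum_prod {Ω ι β : Type*}
    {_ : MeasurableSpace Ω} {μ : Measure Ω} [IsProbabilityMeasure μ] [Fintype ι] [Fintype β]
    [MeasurableSpace β] [MeasurableSingletonClass β] {X : ι → Ω → β}
    (hX : ∀ i, Measurable (X i)) (h : iIndepFun X μ) (s : Finset (ι → β)) :
    μ.real {ω | (fun i ↦ X i ω) ∈ s} = ∑ v ∈ s, ∏ i, (μ.map (X i)).real {v i} := by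
  have hXpi : Measurable fun ω i ↦ X i ω := measurable_pi_lambda _ hX
  rw [show {ω | (fun i ↦ X i ω) ∈ s} = (fun ω i ↦ X i ω) ⁻¹' s from rfl,
    ← map_measureReal_apply hXpi s.measurableSet,
    h.map_fun_eq_pi_map fun i ↦ (hX i).aemeasurable, ← sum_measureReal_singleton]
  simp [measureReal_def, Measure.pi_singleton, ENNReal.toReal_prod]

theorem sqrt_pi_div_le_two_div_sqrt {α : ℝ} (hα : 0 < α) {n : ℕ} (hn : 4 ≤ n) :
    √(π / (8 * (n / 2 : ℕ) * α)) ≤ 2 / √(α * n) := by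
  have hm : (0 : ℝ) < (n / 2 : ℕ) := by exact_mod_cast (by omega : 0 < n / 2)
  have h8m : (3 * n : ℝ) ≤ 8 * (n / 2 : ℕ) := by exact_mod_cast (by omega : 3 * n ≤ 8 * (n / 2))
  have hαn : 0 < α * n := by positivity
  calc √(π / (8 * (n / 2 : ℕ) * α)) ≤ √(2 ^ 2 / (α * n)) := by
        refine sqrt_le_sqrt ((div_le_div_iff₀ (by positivity) hαn).2 ?_)
        nlinarith [mul_le_mul_of_nonneg_right pi_le_four hαn.le,
          mul_le_mul_of_nonneg_left h8m hα.le]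
    _ = 2 / √(α * n) := by rw [sqrt_div' _ hαn.le, sqrt_sq zero_le_two]

/-- Forward Erdős–Littlewood–Offord mod `p`: if `X ∈ (ℤ/pℤ)^n` has i.i.d. `α`-balanced
entries and `w` has at least `n'` non-zero coordinates with `α ≥ 4/n'`, then for every `r`,
`|P(X·w = r) - 1/p| ≤ 2/√(αn')`. -/
theorem forward_erdos_littlewood_offord {Ω : Type*} [MeasureSpace Ω]
    [IsProbabilityMeasure (ℙ : Measure Ω)]
    (p : ℕ) [Fact p.Prime]
    [MeasurableSpace (ZMod p)] [MeasurableSingletonClass (ZMod p)]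
    (n n' : ℕ) (hn' : 0 < n') (hn'n : n' ≤ n)
    (α : ℝ) (hα0 : 0 < α) (hα1 : α ≤ 1) (hαn' : 4 / (n' : ℝ) ≤ α)
    (X : Ω → Fin n → ZMod p)
    (hmeas : ∀ i, Measurable fun ω => X ω i)
    (hindep : iIndepFun (fun i ω => X ω i) ℙ)
    (hident : ∀ i j, Measure.map (fun ω => X ω i) ℙ = Measure.map (fun ω => X ω j) ℙ)
    (hbal : ∀ i (r : ZMod p), ℙ {ω | X ω i = r} ≤ ENNReal.ofReal (1 - α))
    (w : Fin n → ZMod p) (hw : n' ≤ Set.ncard {i | w i ≠ 0}) :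
    ∀ r : ZMod p, |(ℙ {ω | ∑ i, X ω i * w i = r}).toReal - 1 / p|
      ≤ 2 / Real.sqrt (α * n') := by
  intro r
  have hn'4 : 4 ≤ n' := by
    have : (4 : ℝ) ≤ n' := by rw [← div_le_one (by positivity)]; linarith
    exact_mod_cast this
  set i₀ : Fin n := ⟨0, by omega⟩
  set ν := (ℙ : Measure Ω).map fun ω ↦ X ω i₀
  have : IsProbabilityMeasure ν := Measure.isProbabilityMeasure_map (hmeas i₀).aemeasurable
  set q : ZMod p → ℝ := fun a ↦ ν.real {a}
  have hq1 : ∑ a, q a = 1 := by simp [q]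
  have hqα (a : ZMod p) : q a ≤ 1 - α := by
    refine ENNReal.toReal_le_of_le_ofReal (by linarith) ?_
    rw [Measure.map_apply (hmeas i₀) (measurableSet_singleton a)]
    exact hbal i₀ a
  have hlaw : (ℙ {ω | ∑ i, X ω i * w i = r}).toReal
      = ∑ v : Fin n → ZMod p, if ∑ i, v i * w i = r then ∏ i, q (v i) else 0 := by
    have := hindep.measureReal_mem_finset_eq_sum_prod hmeas {v | ∑ i, v i * w i = r}
    simpa [sum_filter, hident _ i₀, q, ν, measureReal_def] using this
  obtain ⟨T, hTw, hTcard⟩ := exists_subset_card_eq (s := {i | w i ≠ 0}) (n := 2 * (n' / 2))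
    (by rw [← Set.ncard_coe_finset, coe_filter]; simp only [mem_univ, true_and]; omega)
  rw [hlaw]
  refine (abs_sum_prod_ite_sub_inv_le_sqrt (fun _ ↦ measureReal_nonneg) hq1 hα0 hqα
    (fun i hi ↦ (mem_filter.1 (hTw hi)).2) (m := n' / 2) (by omega) hTcard r).trans ?_
  exact sqrt_pi_div_le_two_div_sqrt hα0 hn'4
end
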